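/- Let U = { (x,y) ∈ ℝ² : 0 < x < 1 and −1 < y < 1 }, U'₁ = { (x,y) ∈ U : y < x² }, and U'₂ = { (x,y) ∈ U : y > −x² }. Then there is no constant C > 0 such that for all p ∈ ℝ² one has d(p, ℝ² ∖ U) ≤ C · max( d(p, ℝ² ∖ U'₁), d(p, ℝ² ∖ U'₂) ). In fact, for the points p_a = (a, 0) with 0 < a < 1/2, one has d(p_a, ℝ² ∖ U) = a while max( d(p_a, ℝ² ∖ U'₁), d(p_a, ℝ² ∖ U'₂) ) ≤ a². -/
import Mathlib


open Metric

lemma coord_abs_le_dist {n : Type*} [Fintype n] (p q : EuclideanSpace ℝ n) (i : n) :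
    |p i - q i| ≤ dist p q := by
  rw [EuclideanSpace.dist_eq, ← Real.dist_eq]
  have h1 : dist (p i) (q i) = Real.sqrt (dist (p i) (q i) ^ 2) := by
    rw [Real.sqrt_sq dist_nonneg]
  rw [h1]
  apply Real.sqrt_le_sqrt
  exact Finset.single_le_sum (fun j _ => sq_nonneg (dist (p j) (q j))) (Finset.mem_univ i)

lemma euclid_dist_two (x y : Fin 2 → ℝ) :
    dist ((EuclideanSpace.equiv (Fin 2) ℝ).symm x) ((EuclideanSpace.equiv (Fin 2) ℝ).symm y)
      = Real.sqrt ((x 0 - y 0) ^ 2 + (x 1 - y 1) ^ 2) := by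
  rw [EuclideanSpace.dist_eq, Fin.sum_univ_two]
  simp [Real.dist_eq, sq_abs, EuclideanSpace.equiv]

theorem stmt8 (U U₁ U₂ : Set (EuclideanSpace ℝ (Fin 2)))
    (hU : U = {p | 0 < p 0 ∧ p 0 < 1 ∧ -1 < p 1 ∧ p 1 < 1})
    (hU₁ : U₁ = {p ∈ U | p 1 < (p 0) ^ 2})
    (hU₂ : U₂ = {p ∈ U | -(p 0) ^ 2 < p 1}) :
    (¬ ∃ C > (0 : ℝ), ∀ p : EuclideanSpace ℝ (Fin 2),
        infDist p Uᶜ ≤ C * max (infDist p U₁ᶜ) (infDist p U₂ᶜ)) ∧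
    ∀ a : ℝ, 0 < a → a < 1 / 2 →
      infDist ((EuclideanSpace.equiv (Fin 2) ℝ).symm ![a, 0]) Uᶜ = a ∧
      max (infDist ((EuclideanSpace.equiv (Fin 2) ℝ).symm ![a, 0]) U₁ᶜ)
          (infDist ((EuclideanSpace.equiv (Fin 2) ℝ).symm ![a, 0]) U₂ᶜ) ≤ a ^ 2 := by
  have key : ∀ a : ℝ, 0 < a → a < 1 / 2 →
      infDist ((EuclideanSpace.equiv (Fin 2) ℝ).symm ![a, 0]) Uᶜ = a ∧
      max (infDist ((EuclideanSpace.equiv (Fin 2) ℝ).symm ![a, 0]) U₁ᶜ)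
          (infDist ((EuclideanSpace.equiv (Fin 2) ℝ).symm ![a, 0]) U₂ᶜ) ≤ a ^ 2 := by
    intro a ha ha2
    set e := (EuclideanSpace.equiv (Fin 2) ℝ).symm with he
    have hpa0 : (e ![a, 0]) 0 = a := rfl
    have hpa1 : (e ![a, 0]) 1 = 0 := rfl
    -- the origin is in Uᶜ
    have horig : e ![0, 0] ∈ Uᶜ := by
      simp only [hU, Set.mem_compl_iff, Set.mem_setOf_eq]
      intro h
      exact absurd h.1 (by norm_num [he])
    have hdorig : dist (e ![a, 0]) (e ![0, 0]) = a := by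
      rw [euclid_dist_two]
      simp only [Matrix.cons_val_zero, Matrix.cons_val_one, Matrix.head_cons]
      rw [show (a - 0) ^ 2 + ((0:ℝ) - 0) ^ 2 = a ^ 2 by ring, Real.sqrt_sq ha.le]
    have hle : infDist (e ![a, 0]) Uᶜ ≤ a := (infDist_le_dist_of_mem horig).trans_eq hdorig
    have hge : a ≤ infDist (e ![a, 0]) Uᶜ := by
      by_contra hlt
      push_neg at hlt
      obtain ⟨y, hy, hdy⟩ := (infDist_lt_iff ⟨_, horig⟩).1 hlt
      have h0 : |(e ![a, 0]) 0 - y 0| ≤ dist (e ![a, 0]) y := coord_abs_le_dist _ _ 0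
      have h1 : |(e ![a, 0]) 1 - y 1| ≤ dist (e ![a, 0]) y := coord_abs_le_dist _ _ 1
      rw [hpa0] at h0; rw [hpa1] at h1
      simp only [hU, Set.mem_compl_iff, Set.mem_setOf_eq, not_and_or, not_lt] at hy
      rcases hy with h | h | h | h
      · rw [abs_of_nonneg (by linarith)] at h0; linarith
      · rw [abs_of_nonpos (by linarith)] at h0; linarith
      · rw [abs_of_nonneg (by linarith)] at h1; linarith
      · rw [abs_of_nonpos (by linarith)] at h1; linarith
    have hq1 : e ![a, a ^ 2] ∈ U₁ᶜ := by
      simp only [hU₁, Set.mem_compl_iff, Set.mem_sep_iff, not_and_or, not_lt]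
      right
      exact le_of_eq rfl
    have hq2 : e ![a, -(a ^ 2)] ∈ U₂ᶜ := by
      simp only [hU₂, Set.mem_compl_iff, Set.mem_sep_iff, not_and_or, not_lt]
      right
      exact le_of_eq rfl
    have hd1 : dist (e ![a, 0]) (e ![a, a ^ 2]) = a ^ 2 := by
      rw [euclid_dist_two]
      simp only [Matrix.cons_val_zero, Matrix.cons_val_one, Matrix.head_cons]
      rw [show (a - a) ^ 2 + ((0:ℝ) - a ^ 2) ^ 2 = (a ^ 2) ^ 2 by ring,
        Real.sqrt_sq (sq_nonneg a)]
    have hd2 : dist (e ![a, 0]) (e ![a, -(a ^ 2)]) = a ^ 2 := by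
      rw [euclid_dist_two]
      simp only [Matrix.cons_val_zero, Matrix.cons_val_one, Matrix.head_cons]
      rw [show (a - a) ^ 2 + ((0:ℝ) - -(a ^ 2)) ^ 2 = (a ^ 2) ^ 2 by ring,
        Real.sqrt_sq (sq_nonneg a)]
    refine ⟨le_antisymm hle hge, max_le ?_ ?_⟩
    · exact (infDist_le_dist_of_mem hq1).trans_eq hd1
    · exact (infDist_le_dist_of_mem hq2).trans_eq hd2
  refine ⟨?_, key⟩
  rintro ⟨C, hC, h⟩
  set a := min (1/4 : ℝ) (1 / (2 * C)) with ha_def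
  have ha : 0 < a := lt_min (by norm_num) (by positivity)
  have ha2 : a < 1 / 2 := lt_of_le_of_lt (min_le_left _ _) (by norm_num)
  obtain ⟨h1, h2⟩ := key a ha ha2
  have h3 := h ((EuclideanSpace.equiv (Fin 2) ℝ).symm ![a, 0])
  rw [h1] at h3
  have h4 : C * max (infDist ((EuclideanSpace.equiv (Fin 2) ℝ).symm ![a, 0]) U₁ᶜ)
      (infDist ((EuclideanSpace.equiv (Fin 2) ℝ).symm ![a, 0]) U₂ᶜ) ≤ C * a ^ 2 :=
    mul_le_mul_of_nonneg_left h2 hC.le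
  have hCa : C * a ≤ 1 / 2 := by
    have : a ≤ 1 / (2 * C) := min_le_right _ _
    rw [le_div_iff₀ (by positivity)] at this
    linarith
  nlinarith [sq_nonneg a]
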